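/- arXiv:1803.01844 — 4 statements merged into one kernel-verified Lean document; each statement's English description precedes it below -/
import Mathlib

section
/- Let x = [[1,2],[0,1]] and y = [[1,0],[2,1]] in SL₂(ℤ). Then the group homomorphism from the free group on two generators to SL₂(ℤ) sending the two generators to x and y respectively is injective (so the subgroup H = ⟨x, y⟩ is free of rank 2), and moreover H has finite index in SL₂(ℤ). -/
/-- The matrix `[[1,2],[0,1]]` as an element of `SL₂(ℤ)`. -/
def sanov_x : Matrix.SpecialLinearGroup (Fin 2) ℤ :=
  ⟨!![1, 2; 0, 1], by norm_num [Matrix.det_fin_two_of]⟩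

/-- The matrix `[[1,0],[2,1]]` as an element of `SL₂(ℤ)`. -/
def sanov_y : Matrix.SpecialLinearGroup (Fin 2) ℤ :=
  ⟨!![1, 0; 2, 1], by norm_num [Matrix.det_fin_two_of]⟩

/-!
Freeness is ping-pong on `ℤ²`: for `n ≠ 0`, `xⁿ (a, b) = (a + 2nb, b)` sends the vectors with
`|a| < |b|` to vectors with `|b| < |a|`, and `yⁿ` does the opposite.

For the index, `⟨x, y⟩` contains the level-4 congruence subgroup. Indeed every `[[a,b],[c,d]]`
with `a ≡ 1 mod 4` and `b, c` even lies in `⟨x, y⟩`: multiplying on the left by a power of `x`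
(resp. `y`) replaces `a` by `a + 2kc` (resp. `c` by `c + 2ka`), keeps these congruences, and,
since `a` is odd and `c` even, can make the new entry smaller than the other one in absolute
value. This Euclidean descent on `|a| + |c|` ends with `c = 0`, where the matrix is a power of `x`.
-/

open MatrixGroups ModularGroup Matrix.SpecialLinearGroup Pointwise

open Cardinal Function in
theorem FreeGroup.injective_lift_of_zpow_ping_pong {ι G α : Type*} [Nontrivial ι] [Group G]
    [MulAction G α] (a : ι → G) (X : ι → Set α) (hXnonempty : ∀ i, (X i).Nonempty)
    (hXdisj : Pairwise (Disjoint on X))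
    (hpp : Pairwise fun i j => ∀ n : ℤ, n ≠ 0 → a i ^ n • X j ⊆ X i) :
    Injective (FreeGroup.lift a) := by
  have hlift : FreeGroup.lift a =
      (Monoid.CoprodI.lift fun i => FreeGroup.lift fun _ : Unit => a i).comp
        freeGroupEquivCoprodI.toMonoidHom := by
    ext; simp
  rw [hlift, MonoidHom.coe_comp]
  refine .comp (Monoid.CoprodI.lift_injective_of_ping_pong _ ?_ X hXnonempty hXdisj ?_)
    freeGroupEquivCoprodI.injective
  · obtain ⟨i⟩ := ‹Nontrivial ι›.to_nonempty
    exact .inr ⟨i, (natCast_lt_aleph0 (n := 3)).le.trans (aleph0_le_mk (FreeGroup Unit))⟩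
  · intro i j hij h hh
    obtain ⟨n, rfl⟩ : ∃ n : ℤ, FreeGroup.of () ^ n = h :=
      ⟨FreeGroup.freeGroupUnitEquivInt h, FreeGroup.freeGroupUnitEquivInt.symm_apply_apply h⟩
    simpa using hpp hij n (by rintro rfl; simp at hh)

namespace Int

lemma abs_lt_abs_add_two_mul_mul {a b : ℤ} (h : |a| < |b|) {n : ℤ} (hn : n ≠ 0) :
    |b| < |a + 2 * n * b| := by
  have hn1 : 1 ≤ |n| := one_le_abs hn
  calc |b| < 2 * |b| - |a| := by linarith
    _ ≤ 2 * |n| * |b| - |a| := by nlinarith [abs_nonneg b]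
    _ = |2 * n * b| - |a| := by simp [abs_mul]
    _ ≤ |a + 2 * n * b| := by rw [add_comm a]; exact abs_sub_abs_le_abs_add _ _

lemma exists_abs_add_two_mul_mul_lt_of_pos {v m : ℤ} (hm : 0 < m) (hodd : Odd (v + m)) :
    ∃ k : ℤ, |v + 2 * k * m| < m := by
  obtain ⟨q, r, hr0, hr, rfl⟩ : ∃ q r, 0 ≤ r ∧ r < 2 * m ∧ 2 * m * q + r = v :=
    ⟨v / (2 * m), v % (2 * m), emod_nonneg v (by omega), emod_lt_of_pos v (by omega),
      mul_ediv_add_emod v (2 * m)⟩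
  have hrm : r ≠ m := by
    rintro rfl
    exact not_even_iff_odd.2 hodd ⟨r * q + r, by ring⟩
  rcases lt_or_gt_of_ne hrm with hlt | hgt
  · exact ⟨-q, by rw [abs_lt]; constructor <;> linarith⟩
  · exact ⟨-q - 1, by rw [abs_lt]; constructor <;> linarith⟩

lemma exists_abs_add_two_mul_mul_lt {v m : ℤ} (hm : m ≠ 0) (hodd : Odd (v + m)) :
    ∃ k : ℤ, |v + 2 * k * m| < |m| := by
  rcases lt_or_gt_of_ne hm with hneg | hpos
  · obtain ⟨k, hk⟩ := exists_abs_add_two_mul_mul_lt_of_pos (neg_pos.2 hneg)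
      (by rw [show v + -m = v + m - 2 * m by ring]; exact hodd.sub_even (even_two_mul m))
    exact ⟨-k, by rwa [abs_of_neg hneg, show 2 * -k * m = 2 * k * -m by ring]⟩
  · simpa [abs_of_pos hpos] using exists_abs_add_two_mul_mul_lt_of_pos hpos hodd

end Int

lemma sanov_x_eq_T_sq : sanov_x = T ^ 2 := by decide

lemma sanov_y_eq_conj_sanov_x_inv : sanov_y = S * sanov_x⁻¹ * S⁻¹ := by decide

lemma coe_sanov_x_zpow (n : ℤ) : (sanov_x ^ n).1 = !![1, 2 * n; 0, 1] := by
  rw [sanov_x_eq_T_sq, ← zpow_natCast, ← zpow_mul, coe_T_zpow, Nat.cast_ofNat, mul_comm]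

lemma coe_sanov_y_zpow (n : ℤ) : (sanov_y ^ n).1 = !![1, 0; 2 * n, 1] := by
  rw [sanov_y_eq_conj_sanov_x_inv, conj_zpow, inv_zpow', coe_mul, coe_mul, coe_sanov_x_zpow,
    S_inv]
  simp

lemma sanov_x_zpow_smul (n : ℤ) (v : Fin 2 → ℤ) :
    sanov_x ^ n • v = ![v 0 + 2 * n * v 1, v 1] := by
  ext i
  fin_cases i <;> simp [Matrix.SpecialLinearGroup.smul_def, coe_sanov_x_zpow, Matrix.mulVec,
    dotProduct, Fin.sum_univ_two]

lemma sanov_y_zpow_smul (n : ℤ) (v : Fin 2 → ℤ) :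
    sanov_y ^ n • v = ![v 0, v 1 + 2 * n * v 0] := by
  ext i
  fin_cases i <;> simp [Matrix.SpecialLinearGroup.smul_def, coe_sanov_y_zpow, Matrix.mulVec,
    dotProduct, Fin.sum_univ_two, add_comm]

lemma sanov_x_zpow_smul_subset {n : ℤ} (hn : n ≠ 0) :
    sanov_x ^ n • {v : Fin 2 → ℤ | |v 0| < |v 1|} ⊆ {v | |v 1| < |v 0|} := by
  rintro _ ⟨v, hv, rfl⟩
  simpa [sanov_x_zpow_smul] using Int.abs_lt_abs_add_two_mul_mul hv hn

lemma sanov_y_zpow_smul_subset {n : ℤ} (hn : n ≠ 0) :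
    sanov_y ^ n • {v : Fin 2 → ℤ | |v 1| < |v 0|} ⊆ {v | |v 0| < |v 1|} := by
  rintro _ ⟨v, hv, rfl⟩
  simpa [sanov_y_zpow_smul] using Int.abs_lt_abs_add_two_mul_mul hv hn

theorem injective_lift_sanov : Function.Injective (FreeGroup.lift ![sanov_x, sanov_y]) := by
  refine FreeGroup.injective_lift_of_zpow_ping_pong _
    ![{v : Fin 2 → ℤ | |v 1| < |v 0|}, {v | |v 0| < |v 1|}] ?_ ?_ ?_
  · intro i
    fin_cases i
    exacts [⟨![1, 0], by simp⟩, ⟨![0, 1], by simp⟩]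
  · have hdisj : Disjoint {v : Fin 2 → ℤ | |v 1| < |v 0|} {v | |v 0| < |v 1|} :=
      Set.disjoint_left.2 fun _ h1 h2 => lt_asymm (α := ℤ) h1 h2
    intro i j hij
    fin_cases i <;> fin_cases j <;> simp only [Function.onFun] at hij ⊢
    exacts [absurd rfl hij, hdisj, hdisj.symm, absurd rfl hij]
  · intro i j hij n hn
    fin_cases i <;> fin_cases j <;> simp at hij ⊢
    exacts [sanov_x_zpow_smul_subset hn, sanov_y_zpow_smul_subset hn]

lemma sanov_x_zpow_mul_eq (k : ℤ) (A : SL(2, ℤ)) :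
    (sanov_x ^ k * A).1 = !![A 0 0 + 2 * k * A 1 0, A 0 1 + 2 * k * A 1 1; A 1 0, A 1 1] := by
  rw [coe_mul, coe_sanov_x_zpow, Matrix.eta_fin_two A.1, Matrix.mul_fin_two]
  simp

lemma sanov_y_zpow_mul_eq (k : ℤ) (A : SL(2, ℤ)) :
    (sanov_y ^ k * A).1 = !![A 0 0, A 0 1; A 1 0 + 2 * k * A 0 0, A 1 1 + 2 * k * A 0 1] := by
  rw [coe_mul, coe_sanov_y_zpow, Matrix.eta_fin_two A.1, Matrix.mul_fin_two]
  simp [add_comm]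

def SanovCongr (A : SL(2, ℤ)) : Prop :=
  A 0 0 ≡ 1 [ZMOD 4] ∧ 2 ∣ A 0 1 ∧ 2 ∣ A 1 0

namespace SanovCongr

variable {A : SL(2, ℤ)}

lemma odd_apply_zero_zero (hA : SanovCongr A) : Odd (A 0 0) :=
  Int.odd_iff.2 (by have := hA.1; rw [Int.ModEq] at this; omega)

lemma sanov_x_zpow_mul (hA : SanovCongr A) (k : ℤ) : SanovCongr (sanov_x ^ k * A) := by
  obtain ⟨ha, hb, c, hc⟩ := hA
  simp only [SanovCongr, sanov_x_zpow_mul_eq, Matrix.of_apply, Matrix.cons_val',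
    Matrix.cons_val_zero, Matrix.cons_val_one, Matrix.cons_val_fin_one]
  refine ⟨?_, dvd_add hb (Dvd.intro (k * A 1 1) (by ring)), ⟨c, hc⟩⟩
  rwa [Int.ModEq, hc, show 2 * k * (2 * c) = 4 * (k * c) by ring, Int.add_mul_emod_self_left]

lemma sanov_y_zpow_mul (hA : SanovCongr A) (k : ℤ) : SanovCongr (sanov_y ^ k * A) := by
  obtain ⟨ha, hb, hc⟩ := hA
  simp only [SanovCongr, sanov_y_zpow_mul_eq, Matrix.of_apply, Matrix.cons_val',
    Matrix.cons_val_zero, Matrix.cons_val_one, Matrix.cons_val_fin_one]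
  exact ⟨ha, hb, dvd_add hc (Dvd.intro (k * A 0 0) (by ring))⟩

lemma eq_sanov_x_zpow (hA : SanovCongr A) (hc : A 1 0 = 0) : A = sanov_x ^ (A 0 1 / 2) := by
  obtain ⟨ha, hb, -⟩ := hA
  have hdet : A 0 0 * A 1 1 = 1 := by
    have := A.det_coe
    rwa [Matrix.det_fin_two, hc, mul_zero, sub_zero] at this
  obtain ⟨ha1, hd1⟩ : A 0 0 = 1 ∧ A 1 1 = 1 := by
    rcases Int.eq_one_or_neg_one_of_mul_eq_one' hdet with h | h
    · exact h
    · rw [h.1] at ha; exact absurd ha (by decide)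
  ext i j
  fin_cases i <;> fin_cases j <;> simp [coe_sanov_x_zpow, ha1, hd1, hc, Int.mul_ediv_cancel' hb]

theorem mem_closure (hA : SanovCongr A) : A ∈ Subgroup.closure {sanov_x, sanov_y} := by
  induction hn : (A 0 0).natAbs + (A 1 0).natAbs using Nat.strong_induction_on generalizing A
    with | _ n ih
  have hx : sanov_x ∈ Subgroup.closure {sanov_x, sanov_y} := Subgroup.subset_closure (by simp)
  have hy : sanov_y ∈ Subgroup.closure {sanov_x, sanov_y} := Subgroup.subset_closure (by simp)
  have hodd := hA.odd_apply_zero_zero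
  have hc := even_iff_two_dvd.2 hA.2.2
  rcases eq_or_ne (A 1 0) 0 with hc0 | hc0
  · rw [hA.eq_sanov_x_zpow hc0]
    exact Subgroup.zpow_mem _ hx _
  rcases lt_or_ge |A 1 0| |A 0 0| with hlt | hge
  · obtain ⟨k, hk⟩ := Int.exists_abs_add_two_mul_mul_lt hc0 (hodd.add_even hc)
    rw [← Subgroup.mul_mem_cancel_left _ (Subgroup.zpow_mem _ hx k)]
    refine ih _ ?_ (hA.sanov_x_zpow_mul k) rfl
    simp only [sanov_x_zpow_mul_eq, Matrix.of_apply, Matrix.cons_val', Matrix.cons_val_zero,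
      Matrix.cons_val_one, Matrix.cons_val_fin_one, ← hn]
    zify
    linarith
  · obtain ⟨k, hk⟩ := Int.exists_abs_add_two_mul_mul_lt (by rintro h; simp [h] at hodd)
      (hc.add_odd hodd)
    rw [← Subgroup.mul_mem_cancel_left _ (Subgroup.zpow_mem _ hy k)]
    refine ih _ ?_ (hA.sanov_y_zpow_mul k) rfl
    simp only [sanov_y_zpow_mul_eq, Matrix.of_apply, Matrix.cons_val', Matrix.cons_val_zero,
      Matrix.cons_val_one, Matrix.cons_val_fin_one, ← hn]
    zify
    linarith

end SanovCongr

open CongruenceSubgroup in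
lemma Gamma_four_le_closure_sanov : Γ(4) ≤ Subgroup.closure {sanov_x, sanov_y} := by
  intro A hA
  obtain ⟨ha, hb, hc, -⟩ := Gamma_mem.1 hA
  refine SanovCongr.mem_closure ⟨?_, ?_, ?_⟩
  · exact (ZMod.intCast_eq_intCast_iff _ _ 4).1 (by simpa using ha)
  · exact dvd_trans (by norm_num) ((ZMod.intCast_zmod_eq_zero_iff_dvd _ 4).1 hb)
  · exact dvd_trans (by norm_num) ((ZMod.intCast_zmod_eq_zero_iff_dvd _ 4).1 hc)

/-- The homomorphism `F₂ → SL₂(ℤ)` sending the two generators to `x` and `y` is injective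
(so `H = ⟨x, y⟩` is free of rank 2), and `H` has finite index in `SL₂(ℤ)`. -/
theorem sanov_free_and_finite_index :
    Function.Injective (FreeGroup.lift ![sanov_x, sanov_y] :
      FreeGroup (Fin 2) →* Matrix.SpecialLinearGroup (Fin 2) ℤ) ∧
    (Subgroup.closure {sanov_x, sanov_y} :
      Subgroup (Matrix.SpecialLinearGroup (Fin 2) ℤ)).FiniteIndex :=
  ⟨injective_lift_sanov, Subgroup.finiteIndex_of_le Gamma_four_le_closure_sanov⟩
end

section
/- Let a = [[1,4],[0,1]] and b = [[1,0],[4,1]] in SL₂(ℤ). Then there exists N such that for every prime p > N, the images r_p(a) and r_p(b) generate the full group SL₂(ℤ/pℤ). -/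
/-- The matrix `[[1,4],[0,1]]` as an element of `SL₂(ℤ)`. -/
def matA : Matrix.SpecialLinearGroup (Fin 2) ℤ :=
  ⟨!![1, 4; 0, 1], by norm_num [Matrix.det_fin_two_of]⟩

/-- The matrix `[[1,0],[4,1]]` as an element of `SL₂(ℤ)`. -/
def matB : Matrix.SpecialLinearGroup (Fin 2) ℤ :=
  ⟨!![1, 0; 4, 1], by norm_num [Matrix.det_fin_two_of]⟩

/-!
Over a field, `SL₂` is generated by the unitriangular matrices `U t = [[1,t],[0,1]]` and
`L t = [[1,0],[t,1]]`: if `c ≠ 0` then `[[a,b],[c,d]] = U ((a-1)/c) * L c * U ((d-1)/c)`, and if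
`c = 0` then `g * L 1` has lower-left entry `d ≠ 0`. Over `ℤ/pℤ` with `p` odd, `4` is a unit, so
`U t = U 4 ^ k` and `L t = L 4 ^ k` for a suitable `k`; the reductions of `a` and `b` are `U 4`
and `L 4`.
-/

open Matrix
open scoped MatrixGroups

lemma ZMod.exists_eq_nsmul_of_isUnit {n : ℕ} [NeZero n] {t : ZMod n} (ht : IsUnit t) (s : ZMod n) :
    ∃ k : ℕ, s = k • t := by
  obtain ⟨u, rfl⟩ := ht
  exact ⟨(s * ↑u⁻¹).val, by rw [nsmul_eq_mul, ZMod.natCast_zmod_val, Units.inv_mul_cancel_right]⟩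

namespace SL2

section CommRing

variable {R : Type*} [CommRing R]

def upper (t : R) : SL(2, R) :=
  ⟨!![1, t; 0, 1], by simp [det_fin_two_of]⟩

def lower (t : R) : SL(2, R) :=
  ⟨!![1, 0; t, 1], by simp [det_fin_two_of]⟩

@[simp]
lemma coe_upper (t : R) : (upper t : Matrix (Fin 2) (Fin 2) R) = !![1, t; 0, 1] := rfl

@[simp]
lemma coe_lower (t : R) : (lower t : Matrix (Fin 2) (Fin 2) R) = !![1, 0; t, 1] := rfl

lemma upper_mul_upper (s t : R) : upper s * upper t = upper (s + t) := by
  ext i j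
  fin_cases i <;> fin_cases j <;> simp [add_comm]

lemma lower_mul_lower (s t : R) : lower s * lower t = lower (s + t) := by
  ext i j
  fin_cases i <;> fin_cases j <;> simp

lemma upper_pow (t : R) (n : ℕ) : upper t ^ n = upper (n • t) := by
  induction n with
  | zero => ext i j; fin_cases i <;> fin_cases j <;> simp
  | succ n ih => rw [pow_succ, ih, upper_mul_upper, succ_nsmul]

lemma lower_pow (t : R) (n : ℕ) : lower t ^ n = lower (n • t) := by
  induction n with
  | zero => ext i j; fin_cases i <;> fin_cases j <;> simp
  | succ n ih => rw [pow_succ, ih, lower_mul_lower, succ_nsmul]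

lemma map_matA : SpecialLinearGroup.map (Int.castRingHom R) matA = upper 4 := by
  ext i j
  rw [SpecialLinearGroup.map_apply_coe, RingHom.mapMatrix_apply, matA]
  fin_cases i <;> fin_cases j <;> simp

lemma map_matB : SpecialLinearGroup.map (Int.castRingHom R) matB = lower 4 := by
  ext i j
  rw [SpecialLinearGroup.map_apply_coe, RingHom.mapMatrix_apply, matB]
  fin_cases i <;> fin_cases j <;> simp

end CommRing

section Field

variable {F : Type*} [Field F]

lemma eq_upper_mul_lower_mul_upper (g : SL(2, F)) (hc : g 1 0 ≠ 0) :
    g = upper ((g 0 0 - 1) / g 1 0) * lower (g 1 0) * upper ((g 1 1 - 1) / g 1 0) := by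
  have hdet : g 0 0 * g 1 1 - g 0 1 * g 1 0 = 1 := by
    rw [← det_fin_two]; exact g.det_coe
  ext i j
  fin_cases i <;> fin_cases j <;> simp [Matrix.mul_apply, Fin.sum_univ_two] <;> field_simp <;>
    first | linear_combination -hdet | ring

lemma closure_range_upper_union_range_lower :
    Subgroup.closure (Set.range (upper (R := F)) ∪ Set.range lower) = ⊤ := by
  set H := Subgroup.closure (Set.range (upper (R := F)) ∪ Set.range lower)
  have upper_mem (t : F) : upper t ∈ H := Subgroup.subset_closure (.inl ⟨t, rfl⟩)
  have lower_mem (t : F) : lower t ∈ H := Subgroup.subset_closure (.inr ⟨t, rfl⟩)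
  have mem_of_ne_zero (g : SL(2, F)) (hc : g 1 0 ≠ 0) : g ∈ H := by
    rw [eq_upper_mul_lower_mul_upper g hc]
    exact mul_mem (mul_mem (upper_mem _) (lower_mem _)) (upper_mem _)
  refine eq_top_iff.mpr fun g _ ↦ ?_
  obtain hc | hc := ne_or_eq (g 1 0) 0
  · exact mem_of_ne_zero g hc
  have hd : g 1 1 ≠ 0 := by
    intro hd
    have hdet := g.det_coe
    rw [det_fin_two, hc, hd] at hdet
    simp at hdet
  have hc' : (g * lower 1 : SL(2, F)) 1 0 ≠ 0 := by
    simpa [Matrix.mul_apply, Fin.sum_univ_two, hc] using hd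
  simpa using mul_mem (mem_of_ne_zero _ hc') (inv_mem (lower_mem 1))

end Field

section ZMod

variable {n : ℕ} [NeZero n]

lemma upper_mem_closure_singleton {t : ZMod n} (ht : IsUnit t) (s : ZMod n) :
    upper s ∈ Subgroup.closure {upper t} := by
  obtain ⟨k, rfl⟩ := ZMod.exists_eq_nsmul_of_isUnit ht s
  rw [← upper_pow]
  exact pow_mem (Subgroup.mem_closure_singleton_self _) k

lemma lower_mem_closure_singleton {t : ZMod n} (ht : IsUnit t) (s : ZMod n) :
    lower s ∈ Subgroup.closure {lower t} := by
  obtain ⟨k, rfl⟩ := ZMod.exists_eq_nsmul_of_isUnit ht s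
  rw [← lower_pow]
  exact pow_mem (Subgroup.mem_closure_singleton_self _) k

end ZMod

lemma closure_upper_lower_eq_top {p : ℕ} [Fact p.Prime] {t : ZMod p} (ht : t ≠ 0) :
    Subgroup.closure {upper t, lower t} = ⊤ := by
  rw [eq_top_iff, ← closure_range_upper_union_range_lower, Subgroup.closure_le]
  rintro _ (⟨s, rfl⟩ | ⟨s, rfl⟩)
  · exact Subgroup.closure_mono (by simp) (upper_mem_closure_singleton ht.isUnit s)
  · exact Subgroup.closure_mono (by simp) (lower_mem_closure_singleton ht.isUnit s)

end SL2

/-- There is an `N` such that for every prime `p > N`, the reductions mod `p` of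
`a = [[1,4],[0,1]]` and `b = [[1,0],[4,1]]` generate all of `SL₂(ℤ/pℤ)`. -/
theorem reductions_generate_SL2 :
    ∃ N : ℕ, ∀ (p : ℕ) [Fact p.Prime], N < p →
      Subgroup.closure {Matrix.SpecialLinearGroup.map (Int.castRingHom (ZMod p)) matA,
          Matrix.SpecialLinearGroup.map (Int.castRingHom (ZMod p)) matB} = ⊤ := by
  refine ⟨2, fun p _ hp ↦ ?_⟩
  have h2 : (2 : ZMod p) ≠ 0 := Ring.two_ne_zero (by rw [ZMod.ringChar_zmod_n]; omega)
  have h4 : (4 : ZMod p) ≠ 0 := by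
    rw [show (4 : ZMod p) = 2 ^ 2 by norm_num]
    exact pow_ne_zero 2 h2
  rw [SL2.map_matA, SL2.map_matB]
  exact SL2.closure_upper_lower_eq_top h4
end

section
/- Let a = [[1,4],[0,1]] and b = [[1,0],[4,1]] in SL₂(ℤ). There exists N such that, setting P = {p : p prime, p ≡ 1 (mod 4), p > N} and K = ∏_{p ∈ P} SL₂(ℤ/pℤ) (a compact group with the product topology), the subgroup of K generated by the two elements α = (r_p(a))_{p ∈ P} and β = (r_p(b))_{p ∈ P} is dense in K. -/
/-- Each finite group `SL₂(ℤ/nℤ)` carries the discrete topology. -/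
instance (n : ℕ) : TopologicalSpace (Matrix.SpecialLinearGroup (Fin 2) (ZMod n)) := ⊥

instance (n : ℕ) : DiscreteTopology (Matrix.SpecialLinearGroup (Fin 2) (ZMod n)) := ⟨rfl⟩

/-!
Reduced modulo `p`, `a` and `b` become the unipotents `u(4) = [[1,4],[0,1]]` and
`l(4) = [[1,0],[4,1]]`, and `4` is invertible modulo every odd prime. By the Chinese remainder
theorem a suitable power of `α` agrees on any finite set of coordinates with an arbitrary tuple
`(u(x_p))_p`, so the closure of `⟨α, β⟩` contains all tuples of upper and of lower unipotents.
Every element of `SL₂` over a field is a product `u(x) l(y) u(z) l(w)`, and the closure is a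
subgroup, hence everything; so `N = 0` works.
-/

open Function Matrix

section Unipotent

variable {R : Type*} [CommRing R]

def upperUnipotent (x : R) : SpecialLinearGroup (Fin 2) R :=
  ⟨!![1, x; 0, 1], by simp [det_fin_two_of]⟩

def lowerUnipotent (y : R) : SpecialLinearGroup (Fin 2) R :=
  ⟨!![1, 0; y, 1], by simp [det_fin_two_of]⟩

@[simp]
lemma coe_upperUnipotent (x : R) :
    (upperUnipotent x : Matrix (Fin 2) (Fin 2) R) = !![1, x; 0, 1] :=
  rfl

@[simp]
lemma coe_lowerUnipotent (y : R) :
    (lowerUnipotent y : Matrix (Fin 2) (Fin 2) R) = !![1, 0; y, 1] :=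
  rfl

lemma upperUnipotent_add (x y : R) :
    upperUnipotent (x + y) = upperUnipotent x * upperUnipotent y := by
  ext i j
  fin_cases i <;> fin_cases j <;> simp [add_comm]

lemma lowerUnipotent_add (x y : R) :
    lowerUnipotent (x + y) = lowerUnipotent x * lowerUnipotent y := by
  ext i j
  fin_cases i <;> fin_cases j <;> simp

def upperUnipotentHom : Multiplicative R →* SpecialLinearGroup (Fin 2) R :=
  MonoidHom.mk' (fun x => upperUnipotent x.toAdd) fun _ _ => upperUnipotent_add _ _

def lowerUnipotentHom : Multiplicative R →* SpecialLinearGroup (Fin 2) R :=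
  MonoidHom.mk' (fun x => lowerUnipotent x.toAdd) fun _ _ => lowerUnipotent_add _ _

lemma lowerUnipotent_zero : lowerUnipotent (0 : R) = 1 :=
  map_one (lowerUnipotentHom (R := R))

lemma map_matA {S : Type*} [CommRing S] (f : ℤ →+* S) :
    SpecialLinearGroup.map f matA = upperUnipotent 4 := by
  ext i j
  rw [SpecialLinearGroup.map_apply_coe]
  fin_cases i <;> fin_cases j <;> simp [matA]

lemma map_matB {S : Type*} [CommRing S] (f : ℤ →+* S) :
    SpecialLinearGroup.map f matB = lowerUnipotent 4 := by
  ext i j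
  rw [SpecialLinearGroup.map_apply_coe]
  fin_cases i <;> fin_cases j <;> simp [matB]

end Unipotent

section Field

variable {F : Type*} [Field F]

lemma eq_upperUnipotent_mul_lowerUnipotent_mul_upperUnipotent
    (g : SpecialLinearGroup (Fin 2) F) (hc : g 1 0 ≠ 0) :
    g = upperUnipotent ((g 0 0 - 1) / g 1 0) * lowerUnipotent (g 1 0) *
      upperUnipotent ((g 1 1 - 1) / g 1 0) := by
  have hdet : g 0 0 * g 1 1 - g 0 1 * g 1 0 = 1 := by
    rw [← det_fin_two]; exact g.det_coe
  ext i j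
  fin_cases i <;> fin_cases j <;> simp <;> field_simp
  · ring
  · linear_combination -hdet
  · ring

lemma exists_mul_lowerUnipotent_apply_one_zero_ne_zero (g : SpecialLinearGroup (Fin 2) F) :
    ∃ w, (g * lowerUnipotent w : SpecialLinearGroup (Fin 2) F) 1 0 ≠ 0 := by
  have hdet : g 0 0 * g 1 1 - g 0 1 * g 1 0 = 1 := by
    rw [← det_fin_two]; exact g.det_coe
  have hentry (w : F) :
      (g * lowerUnipotent w : SpecialLinearGroup (Fin 2) F) 1 0 = g 1 0 + g 1 1 * w := by
    simp [mul_apply, Fin.sum_univ_two]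
  by_cases hc : g 1 0 = 0
  · refine ⟨1, ?_⟩
    rw [hentry, hc, zero_add, mul_one]
    rintro h11
    simp [h11, hc] at hdet
  · exact ⟨0, by simpa [hentry] using hc⟩

lemma exists_eq_upperUnipotent_mul_lowerUnipotent_mul_upperUnipotent_mul_lowerUnipotent
    (g : SpecialLinearGroup (Fin 2) F) :
    ∃ x y z w : F,
      g = upperUnipotent x * lowerUnipotent y * upperUnipotent z * lowerUnipotent w := by
  obtain ⟨w, hw⟩ := exists_mul_lowerUnipotent_apply_one_zero_ne_zero g
  have hg : g = g * lowerUnipotent w * lowerUnipotent (-w) := by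
    rw [mul_assoc, ← lowerUnipotent_add, add_neg_cancel, lowerUnipotent_zero, mul_one]
  rw [eq_upperUnipotent_mul_lowerUnipotent_mul_upperUnipotent _ hw] at hg
  exact ⟨_, _, _, _, hg⟩

end Field

lemma ZMod.exists_natCast_eq_of_pairwise_coprime {ι : Type*} {q : ι → ℕ}
    (hq : ∀ i, q i ≠ 0) (hco : Pairwise (Nat.Coprime on q)) (a : ∀ i, ZMod (q i))
    (I : Finset ι) : ∃ k : ℕ, ∀ i ∈ I, (k : ZMod (q i)) = a i := by
  let k := Nat.chineseRemainderOfFinset (fun i => (a i).val) q I (fun i _ => hq i)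
    fun _ _ _ _ hij => hco hij
  refine ⟨k, fun i hi => ?_⟩
  have : NeZero (q i) := ⟨hq i⟩
  rw [← ZMod.natCast_zmod_val (a i), ZMod.natCast_eq_natCast_iff]
  exact k.2 i hi

lemma ZMod.isUnit_four_of_odd {n : ℕ} (hn : Odd n) : IsUnit (4 : ZMod n) := by
  rw [show (4 : ZMod n) = ((2 ^ 2 : ℕ) : ZMod n) by norm_num, ZMod.isUnit_iff_coprime,
    Nat.coprime_pow_left_iff two_pos, Nat.coprime_two_left]
  exact hn

lemma mem_closure_pi_of_forall_finset {ι : Type*} {X : ι → Type*}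
    [∀ i, TopologicalSpace (X i)] [∀ i, DiscreteTopology (X i)]
    {S : Set (∀ i, X i)} {f : ∀ i, X i}
    (h : ∀ I : Finset ι, ∃ s ∈ S, ∀ i ∈ I, s i = f i) : f ∈ closure S := by
  refine mem_closure_iff.mpr fun O hO hfO => ?_
  obtain ⟨I, u, hu, hIu⟩ := isOpen_pi_iff.mp hO f hfO
  obtain ⟨s, hs, hsf⟩ := h I
  exact ⟨s, hIu fun i hi => hsf i hi ▸ (hu i hi).2, hs⟩

lemma pi_apply_mem_closure_zpowers {ι : Type*} {q : ι → ℕ} {G : ι → Type*}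
    [∀ i, Group (G i)] [∀ i, TopologicalSpace (G i)] [∀ i, DiscreteTopology (G i)]
    (hq : ∀ i, q i ≠ 0) (hco : Pairwise (Nat.Coprime on q))
    (φ : ∀ i, Multiplicative (ZMod (q i)) →* G i)
    {u : ∀ i, ZMod (q i)} (hu : ∀ i, IsUnit (u i)) (x : ∀ i, ZMod (q i)) :
    (fun i => φ i (.ofAdd (x i))) ∈
      closure (Subgroup.zpowers fun i => φ i (.ofAdd (u i)) : Set (∀ i, G i)) := by
  refine mem_closure_pi_of_forall_finset fun I => ?_
  obtain ⟨k, hk⟩ := ZMod.exists_natCast_eq_of_pairwise_coprime hq hco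
    (fun i => x i * ↑(hu i).unit⁻¹) I
  refine ⟨_ ^ k, Subgroup.pow_mem _ (Subgroup.mem_zpowers _) k, fun i hi => ?_⟩
  rw [Pi.pow_apply, ← map_pow, ← ofAdd_nsmul, nsmul_eq_mul, hk i hi, mul_assoc,
    (hu i).val_inv_mul, mul_one]

theorem dense_closure_upperUnipotent_lowerUnipotent {ι : Type*} {q : ι → ℕ}
    [∀ i, Fact (q i).Prime] (hq : Injective q) {u v : ∀ i, ZMod (q i)}
    (hu : ∀ i, IsUnit (u i)) (hv : ∀ i, IsUnit (v i)) :
    Dense (Subgroup.closure {fun i => upperUnipotent (u i), fun i => lowerUnipotent (v i)} :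
      Set (∀ i, SpecialLinearGroup (Fin 2) (ZMod (q i)))) := by
  set H := Subgroup.closure {fun i => upperUnipotent (u i), fun i => lowerUnipotent (v i)}
  have hq0 i : q i ≠ 0 := (Fact.out : (q i).Prime).ne_zero
  have hco : Pairwise (Nat.Coprime on q) := fun i j hij =>
    (Nat.coprime_primes Fact.out Fact.out).mpr (hq.ne hij)
  have hU (x : ∀ i, ZMod (q i)) : (fun i => upperUnipotent (x i)) ∈ H.topologicalClosure :=
    have hle : Subgroup.zpowers (fun i => upperUnipotent (u i)) ≤ H :=
      Subgroup.zpowers_le_of_mem (Subgroup.subset_closure (Set.mem_insert _ _))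
    closure_mono hle (pi_apply_mem_closure_zpowers hq0 hco (fun _ => upperUnipotentHom) hu x)
  have hL (y : ∀ i, ZMod (q i)) : (fun i => lowerUnipotent (y i)) ∈ H.topologicalClosure :=
    have hle : Subgroup.zpowers (fun i => lowerUnipotent (v i)) ≤ H :=
      Subgroup.zpowers_le_of_mem (Subgroup.subset_closure (Set.mem_insert_of_mem _ rfl))
    closure_mono hle (pi_apply_mem_closure_zpowers hq0 hco (fun _ => lowerUnipotentHom) hv y)
  rw [dense_iff_closure_eq, Set.eq_univ_iff_forall]
  intro g
  choose x y z w hg using fun i =>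
    exists_eq_upperUnipotent_mul_lowerUnipotent_mul_upperUnipotent_mul_lowerUnipotent (g i)
  have hg' : g = (fun i => upperUnipotent (x i)) * (fun i => lowerUnipotent (y i)) *
      (fun i => upperUnipotent (z i)) * (fun i => lowerUnipotent (w i)) := funext hg
  rw [hg']
  exact mul_mem (mul_mem (mul_mem (hU x) (hL y)) (hU z)) (hL w)

/-- There is an `N` such that, with `P = {p prime : p ≡ 1 (mod 4), p > N}` and
`K = ∏_{p ∈ P} SL₂(ℤ/pℤ)` (a compact group with the product topology, each factor
discrete), the subgroup of `K` generated by `α = (r_p(a))_p` and `β = (r_p(b))_p`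
is dense in `K`, where `a = [[1,4],[0,1]]` and `b = [[1,0],[4,1]]`. -/
theorem dense_subgroup_in_product :
    ∃ N : ℕ,
      Dense ((Subgroup.closure
          {fun p : {p : ℕ // p.Prime ∧ p % 4 = 1 ∧ N < p} =>
              Matrix.SpecialLinearGroup.map (Int.castRingHom (ZMod p.1)) matA,
            fun p : {p : ℕ // p.Prime ∧ p % 4 = 1 ∧ N < p} =>
              Matrix.SpecialLinearGroup.map (Int.castRingHom (ZMod p.1)) matB} :
          Subgroup (∀ p : {p : ℕ // p.Prime ∧ p % 4 = 1 ∧ N < p},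
            Matrix.SpecialLinearGroup (Fin 2) (ZMod p.1))) : Set (∀ p : {p : ℕ // p.Prime ∧ p % 4 = 1 ∧ N < p},
            Matrix.SpecialLinearGroup (Fin 2) (ZMod p.1))) := by
  refine ⟨0, ?_⟩
  have (p : {p : ℕ // p.Prime ∧ p % 4 = 1 ∧ 0 < p}) : Fact p.1.Prime := ⟨p.2.1⟩
  have hfour (p : {p : ℕ // p.Prime ∧ p % 4 = 1 ∧ 0 < p}) : IsUnit (4 : ZMod p.1) :=
    ZMod.isUnit_four_of_odd (Nat.odd_iff.mpr (by omega))
  simp only [map_matA, map_matB]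
  exact dense_closure_upperUnipotent_lowerUnipotent Subtype.val_injective hfour hfour
end

section
/- Let K₁ be a compact metrizable topological group, let c ∈ K₁ be such that the cyclic subgroup generated by c is dense in K₁, let L be a compact metrizable topological group that is not abelian, and let φ₀ : K₁ → L be a measurable function. Define T : K₁ × L → K₁ × L by T(x, y) = (cx, φ₀(x)·y), and suppose T preserves the Haar probability measure μ_{K₁} ⊗ μ_L and is ergodic with respect to it. Then the family of iterates {Tⁿ : n ∈ ℕ} is not equicontinuous. -/
/-!
Since `T` is continuous and ergodic for a measure charging every open set, some point `z₀` has
a dense orbit. Along an ultrafilter the iterates `Tⁿ` converge pointwise to a map `f` (compactness);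
equicontinuity makes `f` continuous, and `f` commutes with `T`. A continuous `S` commuting with `T`
then coincides with the limit `f` for which `f z₀ = S z₀`: both commute with every such limit, and
these limits carry `z₀` to every point. Hence any two continuous maps commuting with `T` commute.
The right translations `(x, y) ↦ (x, y * a)` commute with `T`, so `L` would be abelian.
-/

open MeasureTheory Filter Topology

section IterateLimits

variable {X : Type*} [TopologicalSpace X] {T : X → X}

theorem Function.Commute.of_tendsto_iterate [T2Space X] {S f : X → X} {l : Filter ℕ} [l.NeBot]
    (hS : Continuous S) (hST : Function.Commute S T) (hf : Tendsto (fun n ↦ T^[n]) l (𝓝 f)) :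
    Function.Commute S f := fun x ↦
  tendsto_nhds_unique ((hS.tendsto _).comp (tendsto_pi_nhds.1 hf x))
    (by simpa only [Function.comp_def, (hST.iterate_right _).eq] using tendsto_pi_nhds.1 hf (S x))

theorem exists_tendsto_iterate_apply_eq [CompactSpace X] [T2Space X] {x₀ : X}
    (hx₀ : DenseRange fun n ↦ T^[n] x₀) (w : X) :
    ∃ (l : Ultrafilter ℕ) (f : X → X), Tendsto (fun n ↦ T^[n]) l (𝓝 f) ∧ f x₀ = w := by
  have : NeBot (comap (fun n ↦ T^[n] x₀) (𝓝 w)) := comap_neBot_iff.2 fun t ht ↦ by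
    obtain ⟨_, hx, n, rfl⟩ := mem_closure_iff_nhds.1 (hx₀ w) t ht
    exact ⟨n, hx⟩
  set l := Ultrafilter.of (comap (fun n ↦ T^[n] x₀) (𝓝 w))
  have hf : Tendsto (fun n ↦ T^[n]) l (𝓝 (l.map fun n ↦ T^[n]).lim) :=
    (l.map fun n ↦ T^[n]).le_nhds_lim
  refine ⟨l, _, hf, tendsto_nhds_unique (tendsto_pi_nhds.1 hf x₀) ?_⟩
  exact tendsto_comap.mono_left (Ultrafilter.of_le _)

end IterateLimits

section Equicontinuous

variable {X : Type*} [UniformSpace X] [CompactSpace X] [T2Space X] {T : X → X} {x₀ : X}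

theorem Equicontinuous.eq_of_tendsto_iterate (hT : Equicontinuous fun n : ℕ ↦ T^[n])
    (hx₀ : DenseRange fun n ↦ T^[n] x₀) {S f : X → X} (hS : Continuous S)
    (hST : Function.Commute S T) {l : Filter ℕ} [l.NeBot] (hf : Tendsto (fun n ↦ T^[n]) l (𝓝 f))
    (hfx₀ : f x₀ = S x₀) : S = f := by
  have hf_cont : Continuous f := hf.continuous_of_equicontinuous hT
  have hfT : Function.Commute f T :=
    (Function.Commute.of_tendsto_iterate (hT.continuous 1) (.refl T) hf).symm
  funext w
  obtain ⟨_, g, hg, rfl⟩ := exists_tendsto_iterate_apply_eq hx₀ w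
  calc S (g x₀) = g (S x₀) := (Function.Commute.of_tendsto_iterate hS hST hg).eq x₀
    _ = g (f x₀) := by rw [hfx₀]
    _ = f (g x₀) := ((Function.Commute.of_tendsto_iterate hf_cont hfT hg).eq x₀).symm

theorem Equicontinuous.commute_of_denseRange_iterate (hT : Equicontinuous fun n : ℕ ↦ T^[n])
    (hx₀ : DenseRange fun n ↦ T^[n] x₀) {S R : X → X} (hS : Continuous S) (hR : Continuous R)
    (hST : Function.Commute S T) (hRT : Function.Commute R T) : Function.Commute S R := by
  obtain ⟨l, f, hf, hfx₀⟩ := exists_tendsto_iterate_apply_eq hx₀ (S x₀)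
  rw [hT.eq_of_tendsto_iterate hx₀ hS hST hf hfx₀]
  exact (Function.Commute.of_tendsto_iterate hR hRT hf).symm

end Equicontinuous

section Ergodic

open TopologicalSpace

variable {X : Type*} [TopologicalSpace X] [MeasurableSpace X] [OpensMeasurableSpace X]
  {μ : Measure X} [IsFiniteMeasure μ] [μ.IsOpenPosMeasure] {T : X → X}

theorem Ergodic.ae_exists_iterate_mem (hT : Ergodic T μ) (hT_cont : Continuous T) {U : Set X}
    (hU : IsOpen U) (hU_ne : U.Nonempty) : ∀ᵐ x ∂μ, ∃ n, T^[n] x ∈ U := by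
  set A := ⋃ n, T^[n] ⁻¹' U
  have hA : IsOpen A := isOpen_iUnion fun n ↦ hU.preimage (hT_cont.iterate n)
  have hTA : T ⁻¹' A ⊆ A := fun x hx ↦ by
    obtain ⟨n, hn⟩ := Set.mem_iUnion.1 hx
    exact Set.mem_iUnion.2 ⟨n + 1, by rwa [Set.mem_preimage, Function.iterate_succ_apply]⟩
  have hUA : U ⊆ A := fun x hx ↦ Set.mem_iUnion.2 ⟨0, hx⟩
  rcases hT.ae_empty_or_univ_of_preimage_ae_le hA.nullMeasurableSet hTA.eventuallyLE with h | h
  · exact absurd (measure_mono_null hUA (ae_eq_empty.1 h)) (hU.measure_ne_zero μ hU_ne)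
  · have hA_ae : ∀ᵐ x ∂μ, x ∈ A := ae_iff.2 (ae_eq_univ.1 h)
    exact hA_ae.mono fun x hx ↦ Set.mem_iUnion.1 hx

theorem Ergodic.ae_denseRange_iterate [SecondCountableTopology X] (hT : Ergodic T μ)
    (hT_cont : Continuous T) : ∀ᵐ x ∂μ, DenseRange fun n ↦ T^[n] x := by
  have hB := isBasis_countableBasis X
  have hvisit : ∀ U ∈ countableBasis X, ∀ᵐ x ∂μ, U.Nonempty → ∃ n, T^[n] x ∈ U := fun U hU ↦ by
    by_cases hU_ne : U.Nonempty
    · exact (hT.ae_exists_iterate_mem hT_cont (hB.isOpen hU) hU_ne).mono fun x hx _ ↦ hx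
    · exact .of_forall fun x h ↦ absurd h hU_ne
  filter_upwards [(ae_ball_iff (countable_countableBasis X)).2 hvisit] with x hx
  refine hB.dense_iff.2 fun U hU hU_ne ↦ ?_
  obtain ⟨n, hn⟩ := hx U hU hU_ne
  exact ⟨_, hn, n, rfl⟩

end Ergodic

theorem skew_product_iterates_not_equicontinuous_general
    {K₁ L : Type*}
    [TopologicalSpace K₁] [TopologicalSpace.MetrizableSpace K₁] [CompactSpace K₁]
    [Group K₁] [MeasurableSpace K₁] [BorelSpace K₁]
    [TopologicalSpace L] [TopologicalSpace.MetrizableSpace L] [CompactSpace L]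
    [Group L] [IsTopologicalGroup L] [MeasurableSpace L] [BorelSpace L]
    (hL : ∃ y y' : L, y * y' ≠ y' * y)
    (c : K₁)
    (φ₀ : K₁ → L)
    (T : K₁ × L → K₁ × L) (hT : ∀ z : K₁ × L, T z = (c * z.1, φ₀ z.1 * z.2))
    (μ : Measure K₁) (ν : Measure L)
    [μ.IsHaarMeasure]
    [ν.IsHaarMeasure]
    (hTerg : Ergodic T (μ.prod ν)) :
    ∀ dm : MetricSpace (K₁ × L),
      dm.toUniformSpace.toTopologicalSpace = (instTopologicalSpaceProd :
        TopologicalSpace (K₁ × L)) →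
      ¬ ∀ (z : K₁ × L) (ε : ℝ), 0 < ε → ∃ U ∈ nhds z, ∀ z' ∈ U, ∀ n : ℕ,
          @dist _ dm.toDist (T^[n] z) (T^[n] z') < ε := by
  intro dm hdm hequi
  let : MetricSpace (K₁ × L) := dm.replaceTopology hdm.symm
  have hT_equi : Equicontinuous fun n : ℕ ↦ T^[n] := fun z ↦
    Metric.equicontinuousAt_iff_right.2 fun ε hε ↦
      let ⟨U, hU, hUε⟩ := hequi z ε hε
      Filter.mem_of_superset hU hUε
  obtain ⟨z₀, hz₀⟩ := (hTerg.ae_denseRange_iterate (hT_equi.continuous 1)).exists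
  have hT_mul_right (a : L) : Function.Commute (fun z : K₁ × L ↦ (z.1, z.2 * a)) T := fun z ↦ by
    simp only [hT, mul_assoc]
  obtain ⟨g, h, hgh⟩ := hL
  have hgh_comm := (hT_equi.commute_of_denseRange_iterate hz₀ (by fun_prop) (by fun_prop)
    (hT_mul_right g) (hT_mul_right h)).eq (1, 1)
  simp only [one_mul, Prod.mk.injEq, true_and] at hgh_comm
  exact hgh hgh_comm.symm

/-- Let `K₁` be a compact metrizable topological group, `c ∈ K₁` with dense cyclic subgroup,
`L` a compact metrizable non-abelian topological group, `φ₀ : K₁ → L` measurable, and let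
`T(x, y) = (c·x, φ₀(x)·y)`. If `T` preserves the Haar probability measure `μ_{K₁} ⊗ μ_L`
and is ergodic with respect to it, then for any metric on `K₁ × L` inducing the product
topology, the family of iterates `{Tⁿ : n ∈ ℕ}` is not equicontinuous: it is not the case
that for every point `z` and every `ε > 0` there is a neighborhood `U` of `z` with
`dist (Tⁿ z) (Tⁿ z') < ε` for all `z' ∈ U` and all `n`. -/
theorem skew_product_iterates_not_equicontinuous
    {K₁ L : Type*}
    [TopologicalSpace K₁] [TopologicalSpace.MetrizableSpace K₁] [CompactSpace K₁]
    [Group K₁] [IsTopologicalGroup K₁] [MeasurableSpace K₁] [BorelSpace K₁]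
    [TopologicalSpace L] [TopologicalSpace.MetrizableSpace L] [CompactSpace L]
    [Group L] [IsTopologicalGroup L] [MeasurableSpace L] [BorelSpace L]
    (hL : ∃ y y' : L, y * y' ≠ y' * y)
    (c : K₁) (hc : Dense ((Subgroup.zpowers c : Subgroup K₁) : Set K₁))
    (φ₀ : K₁ → L) (hφ : Measurable φ₀)
    (T : K₁ × L → K₁ × L) (hT : ∀ z : K₁ × L, T z = (c * z.1, φ₀ z.1 * z.2))
    (μ : Measure K₁) (ν : Measure L)
    [μ.IsHaarMeasure] [IsProbabilityMeasure μ]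
    [ν.IsHaarMeasure] [IsProbabilityMeasure ν]
    (hTerg : Ergodic T (μ.prod ν)) :
    ∀ dm : MetricSpace (K₁ × L),
      dm.toUniformSpace.toTopologicalSpace = (instTopologicalSpaceProd :
        TopologicalSpace (K₁ × L)) →
      ¬ ∀ (z : K₁ × L) (ε : ℝ), 0 < ε → ∃ U ∈ nhds z, ∀ z' ∈ U, ∀ n : ℕ,
          @dist _ dm.toDist (T^[n] z) (T^[n] z') < ε :=
  skew_product_iterates_not_equicontinuous_general hL c φ₀ T hT μ ν hTerg
end
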